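/- Let Σ be a (restricted) root system with positive system Σ⁺ and simple roots Π, W its Weyl group. Let Θ ⊂ Π and Σ_M⁺ = ℤΘ ∩ Σ⁺, with W(M) = {w ∈ W : w(Σ_M⁺) ⊂ Σ⁺}. Let η-support be a subset S ⊂ Π with Σ_η⁺ = ℤS ∩ Σ⁺. Then #{w ∈ W(S, Θ)} = #{w ∈ W(M) : w(Σ⁺) ∩ Σ_η⁺ = ∅}, where W(S,Θ) = {w ∈ W(S) ∩ W(Θ)^{-1} : w(Σ_S) ∩ Σ_Θ = ∅}, W(Θ') = {w ∈ W : w(Θ') ⊂ Σ⁺}, and Σ_{Θ'} = ℤΘ' ∩ Σ. -/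

import Mathlib

/-! Fix a longest element `w₀` of the parabolic subgroup `W_S = ⟨s_α : α ∈ S⟩`, i.e. one sending
every positive root of `ℤS` to a negative root. It exists because, when `w α > 0` for some
`α ∈ S`, right multiplication by `s_α` strictly decreases the number of positive roots of `ℤS`
that `w` keeps positive. Then `w ↦ w₀ w⁻¹` maps `W(S, Θ)` bijectively onto
`{w ∈ W(M) : w(Σ⁺) ∩ Σ_η⁺ = ∅}`, with inverse `u ↦ u⁻¹ w₀`. Both verifications rest on two facts
about coordinates with respect to the simple roots: `W_S` fixes the coordinates outside `S`, so
it keeps positive the positive roots outside `ℤS`; and a Weyl group element sending `X ⊆ Π` to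
positive roots sends every positive root of `ℤX` to a positive root, being a nonnegative
combination of positive roots. -/

/-! Abstract (possibly non-reduced, crystallographic) root system in a finite-dimensional
real inner product space, with a positive system and simple roots; the Weyl group is the
subgroup of linear isometries generated by the reflections in the roots. -/

noncomputable def rootRefl {V : Type*} [NormedAddCommGroup V] [InnerProductSpace ℝ V]
    [FiniteDimensional ℝ V] (α : V) : V ≃ₗᵢ[ℝ] V :=
  Submodule.reflection (Submodule.span ℝ {α})ᗮ

structure RootSystemData (V : Type*) [NormedAddCommGroup V] [InnerProductSpace ℝ V]
    [FiniteDimensional ℝ V] where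
  /-- the set of roots -/
  roots : Set V
  /-- the positive system -/
  pos : Set V
  /-- the simple roots determined by the positive system -/
  simple : Set V
  finite : roots.Finite
  ne_zero : ∀ α ∈ roots, α ≠ (0 : V)
  refl_stable : ∀ α ∈ roots, ∀ β ∈ roots, rootRefl α β ∈ roots
  crystallographic : ∀ α ∈ roots, ∀ β ∈ roots,
    ∃ n : ℤ, 2 * (inner ℝ β α : ℝ) / (inner ℝ α α : ℝ) = (n : ℝ)
  pos_subset : pos ⊆ roots
  pos_union : roots = pos ∪ (-pos)
  pos_disjoint : Disjoint pos (-pos)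
  simple_subset : simple ⊆ pos
  simple_indep : LinearIndependent ℝ ((↑) : simple → V)
  pos_natSpan : ∀ α ∈ pos, ∃ f : V →₀ ℕ,
    (f.support : Set V) ⊆ simple ∧ α = f.sum fun β n => (n : ℝ) • β

/-- The Weyl group: the subgroup of isometries generated by all root reflections. -/
noncomputable def RootSystemData.weyl {V : Type*} [NormedAddCommGroup V]
    [InnerProductSpace ℝ V] [FiniteDimensional ℝ V] (R : RootSystemData V) :
    Subgroup (V ≃ₗᵢ[ℝ] V) :=
  Subgroup.closure {w | ∃ α ∈ R.roots, w = rootRefl α}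

open Submodule

section ReflectionSubgroup

variable {V : Type*} [NormedAddCommGroup V] [InnerProductSpace ℝ V] [FiniteDimensional ℝ V]

lemma rootRefl_apply (α x : V) :
    rootRefl α x = x - (2 * inner ℝ α x / inner ℝ α α) • α := by
  rw [rootRefl, reflection_orthogonal_apply, reflection_apply, starProjection_singleton,
    real_inner_self_eq_norm_sq]
  module

lemma rootRefl_apply_self (α : V) : rootRefl α α = -α :=
  reflection_orthogonalComplement_singleton_eq_neg α

lemma rootRefl_inv (α : V) : (rootRefl α)⁻¹ = rootRefl α :=
  LinearIsometryEquiv.ext fun _ => rfl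

lemma rootRefl_apply_sub_mem_span (α x : V) : rootRefl α x - x ∈ span ℝ {α} := by
  rw [rootRefl_apply, sub_sub_cancel_left]
  exact neg_mem (smul_mem _ _ (mem_span_singleton_self α))

def reflectionSubgroup (T : Set V) : Subgroup (V ≃ₗᵢ[ℝ] V) :=
  Subgroup.closure {w | ∃ α ∈ T, w = rootRefl α}

lemma reflectionSubgroup_mono {T T' : Set V} (h : T ⊆ T') :
    reflectionSubgroup T ≤ reflectionSubgroup T' :=
  Subgroup.closure_mono fun _ ⟨α, hα, hw⟩ => ⟨α, h hα, hw⟩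

lemma rootRefl_mem_reflectionSubgroup {T : Set V} {α : V} (hα : α ∈ T) :
    rootRefl α ∈ reflectionSubgroup T :=
  Subgroup.subset_closure ⟨α, hα, rfl⟩

lemma mapsTo_of_mem_reflectionSubgroup {T Y : Set V}
    (hY : ∀ α ∈ T, Set.MapsTo (rootRefl α) Y Y) {w : V ≃ₗᵢ[ℝ] V}
    (hw : w ∈ reflectionSubgroup T) : Set.MapsTo w Y Y := by
  induction hw using Subgroup.closure_induction'' with
  | mem _ h => obtain ⟨α, hα, rfl⟩ := h; exact hY α hα
  | inv_mem _ h => obtain ⟨α, hα, rfl⟩ := h; rw [rootRefl_inv]; exact hY α hα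
  | one => exact Set.mapsTo_id Y
  | mul _ _ _ _ hx hy => exact hx.comp hy

lemma apply_sub_mem_span_of_mem_reflectionSubgroup {T : Set V} {w : V ≃ₗᵢ[ℝ] V}
    (hw : w ∈ reflectionSubgroup T) (x : V) : w x - x ∈ span ℝ T := by
  induction hw using Subgroup.closure_induction'' generalizing x with
  | mem _ h =>
    obtain ⟨α, hα, rfl⟩ := h
    exact span_mono (Set.singleton_subset_iff.mpr hα) (rootRefl_apply_sub_mem_span α x)
  | inv_mem _ h =>
    obtain ⟨α, hα, rfl⟩ := h
    rw [rootRefl_inv]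
    exact span_mono (Set.singleton_subset_iff.mpr hα) (rootRefl_apply_sub_mem_span α x)
  | one => simp
  | mul a b _ _ ha hb =>
    rw [LinearIsometryEquiv.coe_mul, Function.comp_apply, ← sub_add_sub_cancel]
    exact add_mem (ha (b x)) (hb x)

end ReflectionSubgroup

namespace RootSystemData

variable {V : Type*} [NormedAddCommGroup V] [InnerProductSpace ℝ V] [FiniteDimensional ℝ V]
  (R : RootSystemData V)

lemma simple_subset_roots : R.simple ⊆ R.roots := R.simple_subset.trans R.pos_subset

lemma neg_mem_roots {α : V} (hα : α ∈ R.roots) : -α ∈ R.roots := by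
  rw [R.pos_union] at hα ⊢
  rcases hα with h | h
  · exact Or.inr (by simpa using h)
  · exact Or.inl h

lemma notMem_pos_of_neg_mem_pos {α : V} (h : -α ∈ R.pos) : α ∉ R.pos :=
  fun hα => Set.disjoint_left.mp R.pos_disjoint hα (Set.mem_neg.mpr h)

lemma neg_mem_pos_iff {α : V} (hα : α ∈ R.roots) : -α ∈ R.pos ↔ α ∉ R.pos := by
  rw [R.pos_union] at hα
  exact ⟨R.notMem_pos_of_neg_mem_pos, hα.resolve_left⟩

lemma rootRefl_apply_eq_add_int_smul {α β : V} (hα : α ∈ R.roots) (hβ : β ∈ R.roots) :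
    ∃ n : ℤ, rootRefl α β = β + (n : ℝ) • α := by
  obtain ⟨n, hn⟩ := R.crystallographic α hα β hβ
  refine ⟨-n, ?_⟩
  rw [rootRefl_apply, real_inner_comm, hn]
  push_cast
  module

lemma mapsTo_roots_of_mem_weyl {w : V ≃ₗᵢ[ℝ] V} (hw : w ∈ R.weyl) :
    Set.MapsTo w R.roots R.roots :=
  mapsTo_of_mem_reflectionSubgroup (fun α hα _ hβ => R.refl_stable α hα _ hβ) hw

lemma mapsTo_roots_inter_span {S : Set V} (hS : S ⊆ R.roots) {w : V ≃ₗᵢ[ℝ] V}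
    (hw : w ∈ reflectionSubgroup S) :
    Set.MapsTo w (R.roots ∩ span ℤ S) (R.roots ∩ span ℤ S) := by
  refine mapsTo_of_mem_reflectionSubgroup (fun α hα β hβ => ?_) hw
  obtain ⟨hβ, hβS⟩ := hβ
  refine ⟨R.refl_stable α (hS hα) β hβ, ?_⟩
  obtain ⟨n, hn⟩ := R.rootRefl_apply_eq_add_int_smul (hS hα) hβ
  rw [hn, Int.cast_smul_eq_zsmul]
  exact add_mem hβS (zsmul_mem (subset_span hα) n)

/-- The coordinate along `θ` in a basis of `V` extending the simple roots; zero when `θ` is not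
a vector of that basis. -/
noncomputable def coord (θ : V) : V →ₗ[ℝ] ℝ :=
  Finsupp.lapply θ ∘ₗ Finsupp.lmapDomain ℝ ℝ Subtype.val ∘ₗ
    (Module.Basis.extend (R.simple_indep.linearIndepOn_id' Subtype.range_coe)).repr.toLinearMap

open Classical in
lemma coord_simple {θ θ' : V} (hθ' : θ' ∈ R.simple) :
    R.coord θ θ' = if θ' = θ then 1 else 0 := by
  set hli := R.simple_indep.linearIndepOn_id' Subtype.range_coe
  have h : θ' = Module.Basis.extend hli ⟨θ', hli.subset_extend _ hθ'⟩ :=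
    (Module.Basis.extend_apply_self hli ⟨θ', hli.subset_extend _ hθ'⟩).symm
  rw [coord, LinearMap.comp_apply, LinearMap.comp_apply, LinearEquiv.coe_coe]
  conv_lhs => rw [h]
  rw [Module.Basis.repr_self, Finsupp.lmapDomain_apply, Finsupp.mapDomain_single,
    Finsupp.lapply_apply, Finsupp.single_apply]

lemma coord_eq_zero_of_mem_span {X : Set V} (hX : X ⊆ R.simple) {θ : V} (hθ : θ ∉ X) {x : V}
    (hx : x ∈ span ℝ X) : R.coord θ x = 0 := by
  classical
  have : span ℝ X ≤ LinearMap.ker (R.coord θ) := by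
    refine span_le.mpr fun θ' hθ' => ?_
    rw [SetLike.mem_coe, LinearMap.mem_ker, R.coord_simple (hX hθ'), if_neg]
    rintro rfl
    exact hθ hθ'
  exact this hx

lemma exists_nat_repr_of_mem_pos {α : V} (hα : α ∈ R.pos) : ∃ f : V →₀ ℕ,
    α = (f.sum fun β n => (n : ℝ) • β) ∧ ∀ θ, R.coord θ α = f θ := by
  classical
  obtain ⟨f, hsupp, hsum⟩ := R.pos_natSpan α hα
  refine ⟨f, hsum, fun θ => ?_⟩
  rw [hsum, map_finsuppSum, Finsupp.sum, Finset.sum_congr rfl fun β hβ => by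
    rw [map_smul, R.coord_simple (hsupp hβ), smul_eq_mul, mul_ite, mul_one, mul_zero]]
  rw [Finset.sum_ite_eq']
  split_ifs with h
  · rfl
  · rw [Finsupp.notMem_support_iff.mp h, Nat.cast_zero]

lemma exists_nat_repr_of_coord_eq_zero {X : Set V} {α : V} (hα : α ∈ R.pos)
    (hX : ∀ θ ∉ X, R.coord θ α = 0) :
    ∃ f : V →₀ ℕ, (f.support : Set V) ⊆ X ∧ α = f.sum fun β n => (n : ℝ) • β := by
  obtain ⟨f, hsum, hcoord⟩ := R.exists_nat_repr_of_mem_pos hα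
  refine ⟨f, fun θ hθ => ?_, hsum⟩
  by_contra hθX
  have := hcoord θ ▸ hX θ hθX
  exact Finsupp.mem_support_iff.mp hθ (by exact_mod_cast this)

lemma coord_nonneg_of_mem_pos {α : V} (hα : α ∈ R.pos) (θ : V) : 0 ≤ R.coord θ α := by
  obtain ⟨f, -, hcoord⟩ := R.exists_nat_repr_of_mem_pos hα
  rw [hcoord θ]
  positivity

lemma exists_coord_pos_of_mem_pos {α : V} (hα : α ∈ R.pos) : ∃ θ, 0 < R.coord θ α := by
  obtain ⟨f, hsum, hcoord⟩ := R.exists_nat_repr_of_mem_pos hα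
  obtain ⟨θ, hθ⟩ : f.support.Nonempty := by
    rw [Finset.nonempty_iff_ne_empty]
    intro h
    apply R.ne_zero α (R.pos_subset hα)
    rw [hsum, Finsupp.sum, h, Finset.sum_empty]
  refine ⟨θ, ?_⟩
  rw [hcoord θ]
  exact_mod_cast Nat.pos_of_ne_zero (Finsupp.mem_support_iff.mp hθ)

lemma mem_pos_of_coord_nonneg {α : V} (hα : α ∈ R.roots) (h : ∀ θ, 0 ≤ R.coord θ α) :
    α ∈ R.pos := by
  by_contra hn
  obtain ⟨θ, hθ⟩ := R.exists_coord_pos_of_mem_pos ((R.neg_mem_pos_iff hα).mpr hn)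
  rw [map_neg] at hθ
  linarith [h θ]

lemma mem_pos_of_coord_pos {α θ : V} (hα : α ∈ R.roots) (h : 0 < R.coord θ α) :
    α ∈ R.pos := by
  by_contra hn
  have := R.coord_nonneg_of_mem_pos ((R.neg_mem_pos_iff hα).mpr hn) θ
  rw [map_neg] at this
  linarith

lemma exists_coord_pos_of_notMem_span {X : Set V} {α : V} (hα : α ∈ R.pos)
    (h : α ∉ span ℤ X) : ∃ θ ∉ X, 0 < R.coord θ α := by
  by_contra! hX
  obtain ⟨f, hsupp, hsum⟩ := R.exists_nat_repr_of_coord_eq_zero hα fun θ hθ =>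
    le_antisymm (hX θ hθ) (R.coord_nonneg_of_mem_pos hα θ)
  refine h (hsum ▸ sum_mem fun β hβ => ?_)
  dsimp only
  rw [Nat.cast_smul_eq_nsmul]
  exact nsmul_mem (subset_span (hsupp hβ)) _

lemma map_mem_pos_of_mem_span (f : V →ₗ[ℝ] V) {X : Set V} (hX : X ⊆ R.simple)
    (hfX : ∀ θ ∈ X, f θ ∈ R.pos) {α : V} (hα : α ∈ R.pos) (hαX : α ∈ span ℤ X)
    (hfα : f α ∈ R.roots) : f α ∈ R.pos := by
  obtain ⟨g, hsupp, hsum⟩ := R.exists_nat_repr_of_coord_eq_zero hα fun θ hθ =>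
    R.coord_eq_zero_of_mem_span hX hθ (span_le_restrictScalars ℤ ℝ X hαX)
  refine R.mem_pos_of_coord_nonneg hfα fun θ => ?_
  rw [hsum, map_finsuppSum, map_finsuppSum]
  refine Finset.sum_nonneg fun β hβ => ?_
  dsimp only
  rw [map_smul, map_smul, smul_eq_mul]
  exact mul_nonneg (Nat.cast_nonneg _) (R.coord_nonneg_of_mem_pos (hfX β (hsupp hβ)) θ)

lemma reflectionSubgroup_le_weyl {S : Set V} (hS : S ⊆ R.simple) :
    reflectionSubgroup S ≤ R.weyl :=
  reflectionSubgroup_mono (hS.trans R.simple_subset_roots)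

lemma coord_apply_of_mem_reflectionSubgroup {S : Set V} (hS : S ⊆ R.simple) {θ : V}
    (hθ : θ ∉ S) {w : V ≃ₗᵢ[ℝ] V} (hw : w ∈ reflectionSubgroup S) (x : V) :
    R.coord θ (w x) = R.coord θ x := by
  have := R.coord_eq_zero_of_mem_span hS hθ (apply_sub_mem_span_of_mem_reflectionSubgroup hw x)
  rwa [map_sub, sub_eq_zero] at this

lemma apply_mem_pos_of_mem_reflectionSubgroup {S : Set V} (hS : S ⊆ R.simple)
    {w : V ≃ₗᵢ[ℝ] V} (hw : w ∈ reflectionSubgroup S) {β : V} (hβ : β ∈ R.pos)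
    (hβS : β ∉ span ℤ S) : w β ∈ R.pos := by
  obtain ⟨θ, hθS, hθ⟩ := R.exists_coord_pos_of_notMem_span hβ hβS
  refine R.mem_pos_of_coord_pos (θ := θ)
    (R.mapsTo_roots_of_mem_weyl (R.reflectionSubgroup_le_weyl hS hw) (R.pos_subset hβ)) ?_
  rwa [R.coord_apply_of_mem_reflectionSubgroup hS hθS hw]

def nonInversions (S : Set V) (w : V ≃ₗᵢ[ℝ] V) : Set V :=
  {β | β ∈ R.roots ∩ span ℤ S ∩ R.pos ∧ w β ∈ R.pos}

lemma finite_nonInversions (S : Set V) (w : V ≃ₗᵢ[ℝ] V) : (R.nonInversions S w).Finite :=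
  R.finite.subset fun _ hβ => hβ.1.1.1

lemma rootRefl_mapsTo_nonInversions {S : Set V} (hS : S ⊆ R.simple) {α : V} (hα : α ∈ S)
    {w : V ≃ₗᵢ[ℝ] V} (hw : w ∈ R.weyl) (hwα : w α ∈ R.pos) :
    Set.MapsTo (rootRefl α) (R.nonInversions S (w * rootRefl α))
      (R.nonInversions S w \ {α}) := by
  rintro β ⟨⟨hβS, hβ⟩, hwβ⟩
  have hαr : α ∈ R.roots := R.simple_subset_roots (hS hα)
  have hαs : rootRefl α ∈ R.weyl := rootRefl_mem_reflectionSubgroup hαr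
  have hwβr := R.mapsTo_roots_of_mem_weyl (mul_mem hw hαs) hβS.1
  -- otherwise `w s_α β > 0` would be a nonnegative multiple of `w s_α α = -w α < 0`
  have hβα : β ∉ span ℤ {α} := fun hβα =>
    (R.neg_mem_pos_iff hwβr).mp
      (R.map_mem_pos_of_mem_span (-(w * rootRefl α).toLinearMap)
        (Set.singleton_subset_iff.mpr (hS hα)) (by simpa [rootRefl_apply_self] using hwα)
        hβ hβα (R.neg_mem_roots hwβr)) hwβ
  obtain ⟨θ, hθα, hθ⟩ := R.exists_coord_pos_of_notMem_span hβ hβα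
  have hθ' : 0 < R.coord θ (rootRefl α β) := by
    rwa [R.coord_apply_of_mem_reflectionSubgroup (Set.singleton_subset_iff.mpr (hS hα)) hθα
      (rootRefl_mem_reflectionSubgroup rfl)]
  have hsβS := R.mapsTo_roots_inter_span (hS.trans R.simple_subset_roots)
    (rootRefl_mem_reflectionSubgroup hα) hβS
  refine ⟨⟨⟨hsβS, R.mem_pos_of_coord_pos hsβS.1 hθ'⟩, hwβ⟩, fun hsβα => ?_⟩
  rw [Set.mem_singleton_iff.mp hsβα, R.coord_simple (hS hα), if_neg (Ne.symm hθα)] at hθ'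
  exact lt_irrefl 0 hθ'

lemma ncard_nonInversions_mul_rootRefl_lt {S : Set V} (hS : S ⊆ R.simple) {α : V} (hα : α ∈ S)
    {w : V ≃ₗᵢ[ℝ] V} (hw : w ∈ R.weyl) (hwα : w α ∈ R.pos) :
    (R.nonInversions S (w * rootRefl α)).ncard < (R.nonInversions S w).ncard := by
  have hαmem : α ∈ R.nonInversions S w :=
    ⟨⟨⟨R.simple_subset_roots (hS hα), subset_span hα⟩, R.simple_subset (hS hα)⟩, hwα⟩
  calc (R.nonInversions S (w * rootRefl α)).ncard
      = (rootRefl α '' R.nonInversions S (w * rootRefl α)).ncard :=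
        (Set.ncard_image_of_injective _ (rootRefl α).injective).symm
    _ ≤ (R.nonInversions S w \ {α}).ncard :=
        Set.ncard_le_ncard (R.rootRefl_mapsTo_nonInversions hS hα hw hwα).image_subset
          (R.finite_nonInversions S w).sdiff
    _ < (R.nonInversions S w).ncard :=
        Set.ncard_sdiff_singleton_lt_of_mem hαmem (R.finite_nonInversions S w)

lemma exists_apply_mem_pos_of_nonInversions_nonempty {S : Set V} (hS : S ⊆ R.simple)
    {w : V ≃ₗᵢ[ℝ] V} (hw : w ∈ R.weyl) (h : (R.nonInversions S w).Nonempty) :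
    ∃ α ∈ S, w α ∈ R.pos := by
  obtain ⟨β, ⟨⟨hβ, hβS⟩, hβpos⟩, hwβ⟩ := h
  by_contra! hneg
  have hwβr := R.mapsTo_roots_of_mem_weyl hw hβ
  have := R.map_mem_pos_of_mem_span (-w.toLinearMap) hS
    (fun θ hθ => (R.neg_mem_pos_iff
      (R.mapsTo_roots_of_mem_weyl hw (R.simple_subset_roots (hS hθ)))).mpr (hneg θ hθ))
    hβpos hβS (R.neg_mem_roots hwβr)
  exact (R.neg_mem_pos_iff hwβr).mp this hwβ

lemma exists_longest {S : Set V} (hS : S ⊆ R.simple) :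
    ∃ w₀ ∈ reflectionSubgroup S, ∀ β ∈ R.roots ∩ span ℤ S ∩ R.pos, w₀ β ∉ R.pos := by
  obtain ⟨w₀, hw₀, hmin⟩ := (measure fun w => (R.nonInversions S w).ncard).wf.has_min
    (reflectionSubgroup S) ⟨1, one_mem _⟩
  refine ⟨w₀, hw₀, fun β hβ hwβ => ?_⟩
  have hw₀' := R.reflectionSubgroup_le_weyl hS hw₀
  obtain ⟨α, hα, hwα⟩ := R.exists_apply_mem_pos_of_nonInversions_nonempty hS hw₀' ⟨β, hβ, hwβ⟩
  exact hmin _ (mul_mem hw₀ (rootRefl_mem_reflectionSubgroup hα))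
    (R.ncard_nonInversions_mul_rootRefl_lt hS hα hw₀' hwα)

lemma apply_mem_pos_iff (f : V →ₗ[ℝ] V) (M : Submodule ℤ V)
    (hf : ∀ α ∈ R.roots ∩ M ∩ R.pos, f α ∈ R.pos) {α : V} (hα : α ∈ R.roots ∩ M) :
    f α ∈ R.pos ↔ α ∈ R.pos := by
  refine ⟨fun hfα => ?_, fun hαpos => hf α ⟨hα, hαpos⟩⟩
  by_contra hαpos
  have := hf (-α) ⟨⟨R.neg_mem_roots hα.1, neg_mem hα.2⟩, (R.neg_mem_pos_iff hα.1).mpr hαpos⟩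
  rw [map_neg] at this
  exact R.notMem_pos_of_neg_mem_pos this hfα

/-- The set `W(S, Θ)`. -/
def weylPairSet (S Θ : Set V) : Set (V ≃ₗᵢ[ℝ] V) :=
  {w | w ∈ R.weyl ∧ (∀ α ∈ S, w α ∈ R.pos) ∧ (∀ α ∈ Θ, w⁻¹ α ∈ R.pos) ∧
    (w '' (R.roots ∩ (span ℤ S : Set V))) ∩ (R.roots ∩ (span ℤ Θ : Set V)) = ∅}

/-- The set `{w ∈ W(M) : w(Σ⁺) ∩ Σ_η⁺ = ∅}`, where `M` and `η` correspond to `Θ` and `S`. -/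
def weylAvoidSet (Θ S : Set V) : Set (V ≃ₗᵢ[ℝ] V) :=
  {w | w ∈ R.weyl ∧ (∀ α ∈ (R.roots ∩ (span ℤ Θ : Set V)) ∩ R.pos, w α ∈ R.pos) ∧
    (w '' R.pos) ∩ ((span ℤ S : Set V) ∩ R.pos) = ∅}

variable {R} {S Θ : Set V} {w₀ : V ≃ₗᵢ[ℝ] V}

lemma mul_inv_mem_weylAvoidSet (hΘ : Θ ⊆ R.simple) (hS : S ⊆ R.simple)
    (hw₀ : w₀ ∈ reflectionSubgroup S) (hw₀neg : ∀ β ∈ R.roots ∩ span ℤ S ∩ R.pos, w₀ β ∉ R.pos)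
    {w : V ≃ₗᵢ[ℝ] V} (hw : w ∈ R.weylPairSet S Θ) : w₀ * w⁻¹ ∈ R.weylAvoidSet Θ S := by
  obtain ⟨hw, hwS, hwΘ, hwSΘ⟩ := hw
  refine ⟨mul_mem (R.reflectionSubgroup_le_weyl hS hw₀) (inv_mem hw), ?_, ?_⟩
  · rintro α ⟨⟨hα, hαΘ⟩, hαpos⟩
    have hwα : w⁻¹ α ∈ R.pos := R.map_mem_pos_of_mem_span (w⁻¹).toLinearMap hΘ hwΘ hαpos hαΘ
      (R.mapsTo_roots_of_mem_weyl (inv_mem hw) hα)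
    have hwαS : w⁻¹ α ∉ span ℤ S := fun h => (Set.eq_empty_iff_forall_notMem.mp hwSΘ α)
      ⟨⟨w⁻¹ α, ⟨R.mapsTo_roots_of_mem_weyl (inv_mem hw) hα, h⟩, by simp⟩, hα, hαΘ⟩
    exact R.apply_mem_pos_of_mem_reflectionSubgroup hS hw₀ hwα hwαS
  · refine Set.eq_empty_iff_forall_notMem.mpr ?_
    rintro _ ⟨⟨β, hβpos, rfl⟩, hβS, hwβpos⟩
    have hβ := R.pos_subset hβpos
    have hγ : w⁻¹ β ∈ R.roots ∩ span ℤ S := by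
      simpa using R.mapsTo_roots_inter_span (hS.trans R.simple_subset_roots) (inv_mem hw₀)
        ⟨R.mapsTo_roots_of_mem_weyl (mul_mem (R.reflectionSubgroup_le_weyl hS hw₀)
          (inv_mem hw)) hβ, hβS⟩
    have hγneg : -(w⁻¹ β) ∈ R.pos :=
      (R.neg_mem_pos_iff hγ.1).mpr fun h => hw₀neg _ ⟨hγ, h⟩ hwβpos
    have := R.map_mem_pos_of_mem_span w.toLinearMap hS hwS hγneg (neg_mem hγ.2)
      (by simpa using R.neg_mem_roots hβ)
    exact R.notMem_pos_of_neg_mem_pos (by simpa using this) hβpos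

lemma inv_mul_mem_weylPairSet (hΘ : Θ ⊆ R.simple) (hS : S ⊆ R.simple)
    (hw₀ : w₀ ∈ reflectionSubgroup S) (hw₀neg : ∀ β ∈ R.roots ∩ span ℤ S ∩ R.pos, w₀ β ∉ R.pos)
    {u : V ≃ₗᵢ[ℝ] V} (hu : u ∈ R.weylAvoidSet Θ S) : u⁻¹ * w₀ ∈ R.weylPairSet S Θ := by
  obtain ⟨hu, huΘ, huS⟩ := hu
  have hSr := hS.trans R.simple_subset_roots
  have huS' : ∀ δ ∈ R.roots ∩ span ℤ S ∩ R.pos, -(u⁻¹ δ) ∈ R.pos := by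
    rintro δ ⟨⟨hδ, hδS⟩, hδpos⟩
    refine (R.neg_mem_pos_iff (R.mapsTo_roots_of_mem_weyl (inv_mem hu) hδ)).mpr fun h =>
      (Set.eq_empty_iff_forall_notMem.mp huS δ) ⟨⟨u⁻¹ δ, h, by simp⟩, hδS, hδpos⟩
  refine ⟨mul_mem (inv_mem hu) (R.reflectionSubgroup_le_weyl hS hw₀), fun α hα => ?_,
    fun α hα => ?_, ?_⟩
  · have hαS : α ∈ R.roots ∩ span ℤ S := ⟨hSr hα, subset_span hα⟩
    have hδ := R.mapsTo_roots_inter_span hSr hw₀ hαS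
    have hδpos : -(w₀ α) ∈ R.pos :=
      (R.neg_mem_pos_iff hδ.1).mpr (hw₀neg α ⟨hαS, R.simple_subset (hS hα)⟩)
    simpa using huS' _ ⟨⟨R.neg_mem_roots hδ.1, neg_mem hδ.2⟩, hδpos⟩
  · have hαpos := R.simple_subset (hΘ hα)
    have huα : u α ∈ R.pos := huΘ α ⟨⟨R.simple_subset_roots (hΘ hα), subset_span hα⟩, hαpos⟩
    have huαS : u α ∉ span ℤ S := fun h =>
      (Set.eq_empty_iff_forall_notMem.mp huS (u α)) ⟨⟨α, hαpos, rfl⟩, h, huα⟩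
    simpa using R.apply_mem_pos_of_mem_reflectionSubgroup hS (inv_mem hw₀) huα huαS
  · refine Set.eq_empty_iff_forall_notMem.mpr ?_
    rintro _ ⟨⟨β, hβ, rfl⟩, hγ, hγΘ⟩
    set γ := (u⁻¹ * w₀) β
    have hrev := R.apply_mem_pos_iff (-(u⁻¹).toLinearMap) (span ℤ S) huS'
      (R.mapsTo_roots_inter_span hSr hw₀ hβ)
    have hpres := R.apply_mem_pos_iff u.toLinearMap (span ℤ Θ) huΘ ⟨hγ, hγΘ⟩
    change -γ ∈ R.pos ↔ w₀ β ∈ R.pos at hrev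
    change u γ ∈ R.pos ↔ γ ∈ R.pos at hpres
    rw [R.neg_mem_pos_iff hγ] at hrev
    rw [show u γ = w₀ β by simp [γ]] at hpres
    tauto

lemma card_weylPairSet_eq (hΘ : Θ ⊆ R.simple) (hS : S ⊆ R.simple) :
    Nat.card (R.weylPairSet S Θ) = Nat.card (R.weylAvoidSet Θ S) := by
  obtain ⟨w₀, hw₀, hw₀neg⟩ := R.exists_longest hS
  exact Nat.card_congr
    { toFun w := ⟨w₀ * w.1⁻¹, mul_inv_mem_weylAvoidSet hΘ hS hw₀ hw₀neg w.2⟩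
      invFun u := ⟨u.1⁻¹ * w₀, inv_mul_mem_weylPairSet hΘ hS hw₀ hw₀neg u.2⟩
      left_inv w := Subtype.ext (by group)
      right_inv u := Subtype.ext (by group) }

end RootSystemData

theorem stmt1 {V : Type*} [NormedAddCommGroup V] [InnerProductSpace ℝ V]
    [FiniteDimensional ℝ V] (R : RootSystemData V) (Θ S : Set V)
    (hΘ : Θ ⊆ R.simple) (hS : S ⊆ R.simple) :
    Nat.card {w : V ≃ₗᵢ[ℝ] V //
        w ∈ R.weyl ∧ (∀ α ∈ S, w α ∈ R.pos) ∧ (∀ α ∈ Θ, w⁻¹ α ∈ R.pos) ∧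
        (w '' (R.roots ∩ (Submodule.span ℤ S : Set V))) ∩
          (R.roots ∩ (Submodule.span ℤ Θ : Set V)) = ∅}
      = Nat.card {w : V ≃ₗᵢ[ℝ] V //
        w ∈ R.weyl ∧
        (∀ α ∈ (R.roots ∩ (Submodule.span ℤ Θ : Set V)) ∩ R.pos, w α ∈ R.pos) ∧
        (w '' R.pos) ∩ ((Submodule.span ℤ S : Set V) ∩ R.pos) = ∅} :=
  R.card_weylPairSet_eq hΘ hS
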